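/- arXiv:2201.02940 — 6 statements merged into one kernel-verified Lean document; each statement's English description precedes it below -/
import Mathlib

section
/- Let T > 0, let n, m be positive integers, and define μ₀(t) = (T/(T−t))^{n+m} for t ∈ [0, T). Let k > 0, let d : [0, T) → ℝ be a bounded function with |d(t)| ≤ d̄ for all t, and let V : [0, T) → [0, +∞) be continuously differentiable with V′(t) ≤ −k·μ₀(t)·V(t) + μ₀(t)·d(t)² for all t ∈ [0, T). Then V is bounded on [0, T); in fact V(t) ≤ max(V(0), d̄²/k) for all t ∈ [0, T). -/
/-!
Since `μ₀ > 0` and `d² ≤ d̄²`, the right-hand side `μ₀ (d² - k V)` of the differential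
inequality is negative wherever `V > d̄²/k`. So `V` has negative derivative whenever it exceeds
`max (V 0) (d̄²/k)`, and therefore it can never rise above that level.
-/

open Set

theorem le_of_hasDerivWithinAt_Ico_of_deriv_neg_above {f f' : ℝ → ℝ} {a c B : ℝ}
    (hf : ∀ x ∈ Ico a c, HasDerivWithinAt f (f' x) (Ico a c) x) (ha : f a ≤ B)
    (hneg : ∀ x ∈ Ico a c, B < f x → f' x < 0) :
    ∀ x ∈ Ico a c, f x ≤ B := by
  intro t ht
  have hsub : Icc a t ⊆ Ico a c := Icc_subset_Ico_right ht.2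
  have hcont : ContinuousOn f (Icc a t) :=
    ContinuousOn.mono (fun x hx => (hf x hx).continuousWithinAt) hsub
  have hright : ∀ x ∈ Ico a t, HasDerivWithinAt f (f' x) (Ici x) x := fun x hx =>
    have hx' := hsub (Ico_subset_Icc_self hx)
    (hf x hx').mono_of_mem_nhdsWithin (Ico_mem_nhdsGE_of_mem hx')
  -- Compare with the constant barrier `B + ε`, which `f` can only reach with negative slope.
  refine le_of_forall_pos_le_add fun ε hε => ?_
  exact image_le_of_deriv_right_lt_deriv_boundary (B' := fun _ => 0) hcont hright
    (by linarith) (fun _ => hasDerivAt_const _ _)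
    (fun x hx hfx => hneg x (hsub (Ico_subset_Icc_self hx)) (by linarith)) ⟨ht.1, le_rfl⟩

theorem neg_mul_add_mul_sq_neg_of_div_lt {μ k e dbar v : ℝ} (hμ : 0 < μ) (hk : 0 < k)
    (he : |e| ≤ dbar) (hv : dbar ^ 2 / k < v) :
    -k * μ * v + μ * e ^ 2 < 0 := by
  have he2 : e ^ 2 ≤ dbar ^ 2 := sq_le_sq' (abs_le.1 he).1 (abs_le.1 he).2
  have hkv : dbar ^ 2 < k * v := (div_lt_iff₀' hk).1 hv
  calc -k * μ * v + μ * e ^ 2 = μ * (e ^ 2 - k * v) := by ring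
    _ < 0 := mul_neg_of_pos_of_neg hμ (by linarith)

theorem lemma2_boundedness_general (T : ℝ) (hT : 0 < T) (n m : ℕ)
    (k : ℝ) (hk : 0 < k) (d : ℝ → ℝ) (dbar : ℝ)
    (hd : ∀ t ∈ Set.Ico (0:ℝ) T, |d t| ≤ dbar)
    (V V' : ℝ → ℝ)
    (hVderiv : ∀ t ∈ Set.Ico (0:ℝ) T, HasDerivWithinAt V (V' t) (Set.Ico (0:ℝ) T) t)
    (hineq : ∀ t ∈ Set.Ico (0:ℝ) T,
      V' t ≤ -k * (T / (T - t)) ^ (n + m) * V t + (T / (T - t)) ^ (n + m) * (d t) ^ 2) :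
    ∀ t ∈ Set.Ico (0:ℝ) T, V t ≤ max (V 0) (dbar ^ 2 / k) := by
  refine le_of_hasDerivWithinAt_Ico_of_deriv_neg_above hVderiv (le_max_left _ _) ?_
  intro t ht hVt
  have hμ : 0 < (T / (T - t)) ^ (n + m) := pow_pos (div_pos hT (sub_pos.2 ht.2)) _
  exact (hineq t ht).trans_lt <|
    neg_mul_add_mul_sq_neg_of_div_lt hμ hk (hd t ht) ((le_max_right _ _).trans_lt hVt)

/-- Boundedness part of Lemma 2: if `V ≥ 0` is continuously differentiable on `[0, T)` with
`V′(t) ≤ −k·μ₀(t)·V(t) + μ₀(t)·d(t)²`, where `μ₀(t) = (T/(T−t))^(n+m)` and `|d| ≤ d̄`,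
then `V(t) ≤ max(V(0), d̄²/k)` on `[0, T)`. -/
theorem lemma2_boundedness (T : ℝ) (hT : 0 < T) (n m : ℕ) (hn : 0 < n) (hm : 0 < m)
    (k : ℝ) (hk : 0 < k) (d : ℝ → ℝ) (dbar : ℝ)
    (hd : ∀ t ∈ Set.Ico (0:ℝ) T, |d t| ≤ dbar)
    (V V' : ℝ → ℝ)
    (hVnonneg : ∀ t ∈ Set.Ico (0:ℝ) T, 0 ≤ V t)
    (hVderiv : ∀ t ∈ Set.Ico (0:ℝ) T, HasDerivWithinAt V (V' t) (Set.Ico (0:ℝ) T) t)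
    (hV'cont : ContinuousOn V' (Set.Ico (0:ℝ) T))
    (hineq : ∀ t ∈ Set.Ico (0:ℝ) T,
      V' t ≤ -k * (T / (T - t)) ^ (n + m) * V t + (T / (T - t)) ^ (n + m) * (d t) ^ 2) :
    ∀ t ∈ Set.Ico (0:ℝ) T, V t ≤ max (V 0) (dbar ^ 2 / k) :=
  lemma2_boundedness_general T hT n m k hk d dbar hd V V' hVderiv hineq
end

section
/- Let T > 0 and ε > 0, and define μ(t) = (T+ε)/(T+ε−t) for t ∈ [0, T). Let k > 0 and let V : [0, T) → [0, +∞) be differentiable with V′(t) ≤ −k·μ(t)·V(t) for all t ∈ [0, T). Then V(t) ≤ V(0)·((T+ε−t)/(T+ε))^{k(T+ε)} for all t ∈ [0, T); in particular, as t → T⁻, V(t) is eventually bounded by V(0)·(ε/(T+ε))^{k(T+ε)} = V(0)·exp(−k(T+ε)·ln(1+T/ε)). -/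
/-!
With `c = k(T+ε)`, the profile `φ(t) = ((T+ε-t)/(T+ε))^c` solves `φ' = -kμφ` with
`φ(0) = 1`, so `V' ≤ -kμV` makes `V/φ` nonincreasing and `V ≤ V(0)·φ` on `[0, T)`.
Letting `t → T⁻` and using continuity of `φ` at `T` bounds the limsup by `V(0)·φ(T)`.
-/

open Set Filter

theorem antitoneOn_div_of_hasDerivWithinAt_le_mul {D : Set ℝ} (hD : Convex ℝ D)
    {a V V' φ : ℝ → ℝ} (hV : ∀ t ∈ D, HasDerivWithinAt V (V' t) D t)
    (hφ : ∀ t ∈ D, HasDerivWithinAt φ (a t * φ t) D t) (hφ_pos : ∀ t ∈ D, 0 < φ t)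
    (hle : ∀ t ∈ D, V' t ≤ a t * V t) : AntitoneOn (fun t => V t / φ t) D := by
  refine antitoneOn_of_hasDerivWithinAt_nonpos hD
    (fun t ht => ((hV t ht).continuousWithinAt.div (hφ t ht).continuousWithinAt
      (hφ_pos t ht).ne'))
    (fun t ht => ((hV t (interior_subset ht)).div (hφ t (interior_subset ht))
      (hφ_pos t (interior_subset ht)).ne').mono interior_subset) fun t ht => ?_
  have ht : t ∈ D := interior_subset ht
  have hnum : V' t * φ t - V t * (a t * φ t) = (V' t - a t * V t) * φ t := by ring
  rw [hnum]
  exact div_nonpos_of_nonpos_of_nonneg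
    (mul_nonpos_of_nonpos_of_nonneg (sub_nonpos.2 (hle t ht)) (hφ_pos t ht).le) (sq_nonneg _)

theorem hasDerivAt_sub_div_rpow (k : ℝ) {r t : ℝ} (hr : 0 < r) (ht : t < r) :
    HasDerivAt (fun s => ((r - s) / r) ^ (k * r))
      (-k * (r / (r - t)) * ((r - t) / r) ^ (k * r)) t := by
  have hpos : 0 < (r - t) / r := div_pos (sub_pos.2 ht) hr
  have hbase : HasDerivAt (fun s => (r - s) / r) (-1 / r) t := by
    simpa using ((hasDerivAt_id t).const_sub r).div_const r
  convert hbase.rpow_const (p := k * r) (Or.inl hpos.ne') using 1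
  rw [Real.rpow_sub_one hpos.ne']
  field_simp [(sub_pos.2 ht).ne']

theorem limsup_le_of_eventually_le_of_tendsto {α : Type*} {l : Filter α} [l.NeBot]
    {f g : α → ℝ} {b : ℝ} (hf : l.IsCoboundedUnder (· ≤ ·) f) (hfg : f ≤ᶠ[l] g)
    (hg : Tendsto g l (nhds b)) : limsup f l ≤ b :=
  hg.limsup_eq ▸ limsup_le_limsup hfg hf hg.isBoundedUnder_le

theorem prescribed_time_decay_general (T ε : ℝ) (hT : 0 < T) (hε : 0 < ε)
    (k : ℝ) (V V' : ℝ → ℝ)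
    (hVnonneg : ∀ t ∈ Set.Ico (0:ℝ) T, 0 ≤ V t)
    (hVderiv : ∀ t ∈ Set.Ico (0:ℝ) T, HasDerivWithinAt V (V' t) (Set.Ico (0:ℝ) T) t)
    (hineq : ∀ t ∈ Set.Ico (0:ℝ) T, V' t ≤ -k * ((T + ε) / (T + ε - t)) * V t) :
    (∀ t ∈ Set.Ico (0:ℝ) T,
      V t ≤ V 0 * ((T + ε - t) / (T + ε)) ^ (k * (T + ε))) ∧
    Filter.limsup V (nhdsWithin T (Set.Ico (0:ℝ) T)) ≤
      V 0 * (ε / (T + ε)) ^ (k * (T + ε)) ∧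
    V 0 * (ε / (T + ε)) ^ (k * (T + ε)) =
      V 0 * Real.exp (-(k * (T + ε)) * Real.log (1 + T / ε)) := by
  have hr : 0 < T + ε := by positivity
  set φ : ℝ → ℝ := fun t => ((T + ε - t) / (T + ε)) ^ (k * (T + ε))
  have hlt : ∀ t ∈ Ico (0:ℝ) T, t < T + ε := fun t ht => by linarith [ht.2]
  have hφ_pos : ∀ t ∈ Ico (0:ℝ) T, 0 < φ t := fun t ht =>
    Real.rpow_pos_of_pos (div_pos (sub_pos.2 (hlt t ht)) hr) _
  have hanti := antitoneOn_div_of_hasDerivWithinAt_le_mul (convex_Ico 0 T) hVderiv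
    (fun t ht => (hasDerivAt_sub_div_rpow k hr (hlt t ht)).hasDerivWithinAt) hφ_pos hineq
  have hφ0 : φ 0 = 1 := by simp [φ, hr.ne']
  have hbound : ∀ t ∈ Ico (0:ℝ) T, V t ≤ V 0 * φ t := fun t ht => by
    have : V t / φ t ≤ V 0 / φ 0 := hanti (left_mem_Ico.2 hT) ht ht.1
    rwa [hφ0, div_one, div_le_iff₀ (hφ_pos t ht)] at this
  have hφT : φ T = (ε / (T + ε)) ^ (k * (T + ε)) := by simp [φ]
  have hlim : Tendsto (fun t => V 0 * φ t) (nhdsWithin T (Ico 0 T)) (nhds (V 0 * φ T)) := by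
    refine (continuousAt_const.mul (ContinuousAt.rpow_const (by fun_prop) ?_))
      |>.continuousWithinAt.tendsto
    exact Or.inl (by rw [add_sub_cancel_left]; positivity)
  have : (nhdsWithin T (Ico (0:ℝ) T)).NeBot := right_nhdsWithin_Ico_neBot hT
  refine ⟨hbound, hφT ▸ limsup_le_of_eventually_le_of_tendsto
    (isCoboundedUnder_le_of_eventually_le _ (eventually_nhdsWithin_of_forall hVnonneg))
    (eventually_nhdsWithin_of_forall hbound) hlim, ?_⟩
  have hinv : 1 + T / ε = (ε / (T + ε))⁻¹ := by field_simp; ring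
  rw [hinv, Real.log_inv, Real.rpow_def_of_pos (by positivity), neg_mul_neg,
    mul_comm (Real.log _)]

/-- Prescribed-time decay estimate on `[0, T)` from the proof of Corollary 1: with
`μ(t) = (T+ε)/(T+ε−t)`, a nonnegative differentiable `V` with `V′ ≤ −k·μ·V` satisfies
`V(t) ≤ V(0)·((T+ε−t)/(T+ε))^(k(T+ε))`; in particular as `t → T⁻` its limsup is bounded by
`V(0)·(ε/(T+ε))^(k(T+ε))`, which equals `V(0)·exp(−k(T+ε)·ln(1+T/ε))`. -/
theorem prescribed_time_decay (T ε : ℝ) (hT : 0 < T) (hε : 0 < ε)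
    (k : ℝ) (hk : 0 < k) (V V' : ℝ → ℝ)
    (hVnonneg : ∀ t ∈ Set.Ico (0:ℝ) T, 0 ≤ V t)
    (hVderiv : ∀ t ∈ Set.Ico (0:ℝ) T, HasDerivWithinAt V (V' t) (Set.Ico (0:ℝ) T) t)
    (hineq : ∀ t ∈ Set.Ico (0:ℝ) T, V' t ≤ -k * ((T + ε) / (T + ε - t)) * V t) :
    (∀ t ∈ Set.Ico (0:ℝ) T,
      V t ≤ V 0 * ((T + ε - t) / (T + ε)) ^ (k * (T + ε))) ∧
    Filter.limsup V (nhdsWithin T (Set.Ico (0:ℝ) T)) ≤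
      V 0 * (ε / (T + ε)) ^ (k * (T + ε)) ∧
    V 0 * (ε / (T + ε)) ^ (k * (T + ε)) =
      V 0 * Real.exp (-(k * (T + ε)) * Real.log (1 + T / ε)) :=
  prescribed_time_decay_general T ε hT hε k V V' hVnonneg hVderiv hineq
end

section
/- Let T ≥ 0, k > 0, μ̄ > 0, and let σ : [T, ∞) → [0, ∞) be continuous with ∫_T^∞ σ(τ) dτ < ∞. Let V : [T, ∞) → [0, +∞) be continuously differentiable with V′(t) ≤ −k·μ̄·V(t) + μ̄·σ(t) for all t ≥ T. Then V(t) → 0 as t → ∞. -/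
/-!
With `c = k μ̄` and `g = μ̄ σ`, the integrating factor `e^{ct}` turns the differential inequality
into the statement that `t ↦ e^{ct} V t - ∫_T^t e^{cs} g s ds` is antitone, so `V` is dominated
by the solution `e^{-c(t-T)} V T + ∫_T^t e^{-c(t-s)} g s ds` of `u' = -c u + g`, `u T = V T`.
The first term decays exponentially; the second tends to `0` by dominated convergence, since
the kernel `e^{-c(t-s)} 1_{s ≤ t}` is bounded by `1` and tends to `0` pointwise as `t → ∞`.
As `V ≥ 0`, `V → 0`.
-/

open Set Filter MeasureTheory Real Topology

/-- The solution of `u' = -c u + g` with `u T = x₀`. -/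
noncomputable def variationOfConstants (c : ℝ) (g : ℝ → ℝ) (T x₀ t : ℝ) : ℝ :=
  exp (-(c * (t - T))) * x₀ + ∫ s in T..t, exp (-(c * (t - s))) * g s

theorem antitoneOn_exp_mul_sub_primitive {c T b : ℝ} {g V V' : ℝ → ℝ}
    (hg : ContinuousOn g (Icc T b)) (hV : ∀ t ∈ Icc T b, HasDerivWithinAt V (V' t) (Icc T b) t)
    (hle : ∀ t ∈ Ioo T b, V' t ≤ -c * V t + g t) :
    AntitoneOn (fun t => exp (c * t) * V t - ∫ s in T..t, exp (c * s) * g s) (Icc T b) := by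
  have hf : ContinuousOn (fun s => exp (c * s) * g s) (Icc T b) := by fun_prop
  have hsub : ∀ {t}, t ∈ Icc T b → uIcc T t ⊆ Icc T b := fun ht => by
    rw [uIcc_of_le ht.1]; exact Icc_subset_Icc_right ht.2
  refine antitoneOn_of_hasDerivWithinAt_nonpos (convex_Icc T b) ?_
    (f' := fun t => exp (c * t) * (c * V t + V' t - g t)) ?_ ?_
  · refine ContinuousOn.sub ?_ ?_
    · exact (by fun_prop : Continuous fun t => exp (c * t)).continuousOn.mul
        fun t ht => (hV t ht).continuousWithinAt
    · rcases le_or_gt T b with hTb | hbT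
      · rw [← uIcc_of_le hTb] at hf ⊢
        exact intervalIntegral.continuousOn_primitive_interval
          (hf.integrableOn_compact isCompact_uIcc)
      · simp [Icc_eq_empty_of_lt hbT]
  · intro t ht
    rw [interior_Icc] at ht ⊢
    have hnhds : Icc T b ∈ 𝓝 t := Icc_mem_nhds ht.1 ht.2
    have hexp : HasDerivAt (fun u => exp (c * u)) (exp (c * t) * c) t := by
      simpa using ((hasDerivAt_id t).const_mul c).exp
    have hprim : HasDerivAt (fun u => ∫ s in T..u, exp (c * s) * g s) (exp (c * t) * g t) t :=
      intervalIntegral.integral_hasDerivAt_right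
        ((hf.mono (hsub (Ioo_subset_Icc_self ht))).intervalIntegrable)
        ((hf.mono Ioo_subset_Icc_self).stronglyMeasurableAtFilter isOpen_Ioo t ht)
        (hf.continuousAt hnhds)
    exact ((hexp.mul ((hV t (Ioo_subset_Icc_self ht)).hasDerivAt hnhds)).sub hprim
      |>.hasDerivWithinAt.congr_deriv (by ring))
  · intro t ht
    rw [interior_Icc] at ht
    exact mul_nonpos_of_nonneg_of_nonpos (exp_pos _).le (by linarith [hle t ht])

theorem le_variationOfConstants {c T t : ℝ} {g V V' : ℝ → ℝ} (hg : ContinuousOn g (Ici T))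
    (hV : ∀ t ≥ T, HasDerivWithinAt V (V' t) (Ici T) t)
    (hle : ∀ t ≥ T, V' t ≤ -c * V t + g t) (ht : T ≤ t) :
    V t ≤ variationOfConstants c g T (V T) t := by
  have hanti := antitoneOn_exp_mul_sub_primitive (b := t) (hg.mono Icc_subset_Ici_self)
    (fun s hs => (hV s hs.1).mono Icc_subset_Ici_self) (fun s hs => hle s hs.1.le)
  have hmono : exp (c * t) * V t ≤ exp (c * T) * V T + ∫ s in T..t, exp (c * s) * g s := by
    have := hanti (left_mem_Icc.2 ht) (right_mem_Icc.2 ht) ht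
    simp only [intervalIntegral.integral_same, sub_zero] at this
    linarith
  have hformula : variationOfConstants c g T (V T) t =
      exp (-(c * t)) * (exp (c * T) * V T + ∫ s in T..t, exp (c * s) * g s) := by
    simp only [variationOfConstants, mul_add, ← intervalIntegral.integral_const_mul, ← mul_assoc,
      ← exp_add]
    ring_nf
  calc V t = exp (-(c * t)) * (exp (c * t) * V t) := by
        rw [← mul_assoc, ← exp_add, neg_add_cancel, exp_zero, one_mul]
    _ ≤ _ := mul_le_mul_of_nonneg_left hmono (exp_pos _).le
    _ = _ := hformula.symm

theorem tendsto_exp_neg_mul_sub_atTop {c : ℝ} (hc : 0 < c) (s : ℝ) :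
    Tendsto (fun t => exp (-(c * (t - s)))) atTop (𝓝 0) :=
  tendsto_exp_neg_atTop_nhds_zero.comp <|
    (tendsto_atTop_add_const_right _ (-s) tendsto_id).const_mul_atTop hc

theorem tendsto_intervalIntegral_exp_neg_mul_sub_mul_atTop {c T : ℝ} (hc : 0 < c) {g : ℝ → ℝ}
    (hg : IntegrableOn g (Ioi T)) :
    Tendsto (fun t => ∫ s in T..t, exp (-(c * (t - s))) * g s) atTop (𝓝 0) := by
  set F : ℝ → ℝ → ℝ := fun t => (Iic t).indicator fun s => exp (-(c * (t - s))) * g s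
  have hF : ∀ t ≥ T, ∫ s in T..t, exp (-(c * (t - s))) * g s = ∫ s in Ioi T, F t s := by
    intro t ht
    rw [intervalIntegral.integral_of_le ht, setIntegral_indicator measurableSet_Iic,
      Ioi_inter_Iic]
  have hbound : ∀ t s, ‖F t s‖ ≤ ‖g s‖ := by
    intro t s
    by_cases hs : s ∈ Iic t
    · have : exp (-(c * (t - s))) ≤ 1 :=
        exp_le_one_iff.2 (neg_nonpos.2 (mul_nonneg hc.le (sub_nonneg.2 hs)))
      simp only [F, indicator_of_mem hs, norm_mul, norm_of_nonneg (exp_pos _).le]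
      exact mul_le_of_le_one_left (norm_nonneg _) this
    · simp [F, indicator_of_notMem hs]
  have hlim : ∀ s, Tendsto (fun t => F t s) atTop (𝓝 0) := by
    intro s
    have := (tendsto_exp_neg_mul_sub_atTop hc s).mul_const (g s)
    rw [zero_mul] at this
    refine this.congr' ?_
    filter_upwards [eventually_ge_atTop s] with t hst
    simp only [F, indicator_of_mem (mem_Iic.2 hst)]
  have hDCT : Tendsto (fun t => ∫ s in Ioi T, F t s) atTop (𝓝 (∫ s in Ioi T, (0 : ℝ))) :=
    tendsto_integral_filter_of_dominated_convergence (fun s => ‖g s‖)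
      (Eventually.of_forall fun t => ((by fun_prop : Continuous fun s => exp (-(c * (t - s))))
        |>.aestronglyMeasurable.mul hg.aestronglyMeasurable).indicator measurableSet_Iic)
      (Eventually.of_forall fun t => ae_of_all _ (hbound t)) hg.norm
      (ae_of_all _ hlim)
  rw [integral_zero] at hDCT
  exact hDCT.congr' (by filter_upwards [eventually_ge_atTop T] with t ht using (hF t ht).symm)

theorem tendsto_variationOfConstants_atTop {c T : ℝ} (hc : 0 < c) {g : ℝ → ℝ}
    (hg : IntegrableOn g (Ioi T)) (x₀ : ℝ) :
    Tendsto (variationOfConstants c g T x₀) atTop (𝓝 0) := by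
  have h := ((tendsto_exp_neg_mul_sub_atTop hc T).mul_const x₀).add
    (tendsto_intervalIntegral_exp_neg_mul_sub_mul_atTop hc hg)
  rw [zero_mul, zero_add] at h
  exact h

theorem corollary1_asymptotic_general (T k μbar : ℝ) (hk : 0 < k) (hμbar : 0 < μbar)
    (σ V V' : ℝ → ℝ)
    (hσcont : ContinuousOn σ (Set.Ici T))
    (hσint : MeasureTheory.IntegrableOn σ (Set.Ici T))
    (hVnonneg : ∀ t ≥ T, 0 ≤ V t)
    (hVderiv : ∀ t ≥ T, HasDerivWithinAt V (V' t) (Set.Ici T) t)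
    (hineq : ∀ t ≥ T, V' t ≤ -k * μbar * V t + μbar * σ t) :
    Tendsto V atTop (nhds 0) := by
  have hbound : ∀ t ≥ T,
      V t ≤ variationOfConstants (k * μbar) (fun s => μbar * σ s) T (V T) t := fun t ht =>
    le_variationOfConstants (hσcont.const_smul μbar) hVderiv
      (fun s hs => by linarith [hineq s hs]) ht
  have hdecay := tendsto_variationOfConstants_atTop (mul_pos hk hμbar)
    ((hσint.mono_set Ioi_subset_Ici_self).const_mul μbar) (V T)
  exact squeeze_zero' (eventually_atTop.2 ⟨T, hVnonneg⟩) (eventually_atTop.2 ⟨T, hbound⟩) hdecay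

/-- Asymptotic conclusion of Corollary 1: a nonnegative C¹ function on `[T, ∞)` with
`V′ ≤ −k·μ̄·V + μ̄·σ(t)` for an integrable nonnegative continuous forcing `σ`
converges to zero as `t → ∞`. -/
theorem corollary1_asymptotic (T k μbar : ℝ) (hT : 0 ≤ T) (hk : 0 < k) (hμbar : 0 < μbar)
    (σ V V' : ℝ → ℝ)
    (hσcont : ContinuousOn σ (Set.Ici T)) (hσnonneg : ∀ t ≥ T, 0 ≤ σ t)
    (hσint : MeasureTheory.IntegrableOn σ (Set.Ici T))
    (hVnonneg : ∀ t ≥ T, 0 ≤ V t)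
    (hVderiv : ∀ t ≥ T, HasDerivWithinAt V (V' t) (Set.Ici T) t)
    (hV'cont : ContinuousOn V' (Set.Ici T))
    (hineq : ∀ t ≥ T, V' t ≤ -k * μbar * V t + μbar * σ t) :
    Tendsto V atTop (nhds 0) :=
  corollary1_asymptotic_general T k μbar hk hμbar σ V V' hσcont hσint hVnonneg hVderiv hineq
end

section
/- Let T > 0 and ε > 0, define μ̄ := 1 + T/ε and μ : [0,∞) → ℝ by μ(t) = (T+ε)/(T+ε−t) for 0 ≤ t < T and μ(t) = μ̄ for t ≥ T. Let k > 0 and let σ : [0, ∞) → [0, ∞) be continuous with ∫_0^t σ(τ) dτ ≤ σ̄ for all t ≥ 0, where σ̄ > 0 is a constant. Suppose V : [0, ∞) → [0, +∞) is continuous, is differentiable on [0, T) with V′(t) ≤ −k·μ(t)·V(t) there, and is continuously differentiable on [T, ∞) with V′(t) ≤ −k·μ̄·V(t) + μ̄·σ(t) there. Then V is bounded on [0, ∞), V(T) ≤ V(0)·(ε/(T+ε))^{k(T+ε)}, and V(t) → 0 as t → ∞. -/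
/-!
Both phases are integrating-factor arguments. On `[0, T)` the gain `k μ(t) = c/(T+ε-t)`,
with `c = k(T+ε)`, is the derivative of `-c log(T+ε-t)`, so `V(t)·(T+ε-t)^(-c)` is
nonincreasing; comparing `t = 0` and `t = T` gives the prescribed-time bound. On `[T, ∞)`,
with `a = k μ̄`, the function `V(t) e^{at} - μ̄ ∫_T^t σ(s) e^{as} ds` is nonincreasing, so
`V(t) ≤ e^{-a(t-T)} V(T) + μ̄ ∫_T^t e^{-a(t-s)} σ(s) ds`. The bound on `∫_0^t σ` makes `σ`
integrable, and dominated convergence sends the convolution term to `0`. Boundedness then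
follows from continuity of `V` and its convergence.
-/

open Set Filter Real MeasureTheory Topology

theorem mul_exp_le_add_integral_of_hasDerivAt_le {V V' G g h : ℝ → ℝ} {a b : ℝ} (hab : a ≤ b)
    (hV : ContinuousOn V (Icc a b)) (hG : ContinuousOn G (Icc a b))
    (hh : ContinuousOn h (Icc a b)) (hVd : ∀ t ∈ Ioo a b, HasDerivAt V (V' t) t)
    (hGd : ∀ t ∈ Ioo a b, HasDerivAt G (g t) t) (hle : ∀ t ∈ Ioo a b, V' t ≤ -g t * V t + h t) :
    V b * exp (G b) ≤ V a * exp (G a) + ∫ s in a..b, h s * exp (G s) := by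
  have hcont : ContinuousOn (fun s => h s * exp (G s)) (Icc a b) := hh.mul hG.rexp
  have hanti : AntitoneOn (fun t => V t * exp (G t) - ∫ s in a..t, h s * exp (G s)) (Icc a b) := by
    refine antitoneOn_of_hasDerivWithinAt_nonpos (convex_Icc a b)
      (f' := fun t => V' t * exp (G t) + V t * (exp (G t) * g t) - h t * exp (G t)) ?_ ?_ ?_
    · refine (hV.mul hG.rexp).sub ?_
      simpa only [uIcc_of_le hab] using intervalIntegral.continuousOn_primitive_interval'
        (hcont.intervalIntegrable_of_Icc hab) left_mem_uIcc
    · rw [interior_Icc]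
      intro t ht
      have hprim : HasDerivAt (fun u => ∫ s in a..u, h s * exp (G s)) (h t * exp (G t)) t :=
        intervalIntegral.integral_hasDerivAt_right
          ((hcont.mono (Icc_subset_Icc_right ht.2.le)).intervalIntegrable_of_Icc ht.1.le)
          ((hcont.mono Ioo_subset_Icc_self).stronglyMeasurableAtFilter isOpen_Ioo t ht)
          (hcont.continuousAt (Icc_mem_nhds ht.1 ht.2))
      exact (((hVd t ht).mul (hGd t ht).exp).sub hprim).hasDerivWithinAt
    · rw [interior_Icc]
      intro t ht
      have hscaled := mul_le_mul_of_nonneg_right (hle t ht) (exp_pos (G t)).le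
      linarith
  have hends := hanti (left_mem_Icc.2 hab) (right_mem_Icc.2 hab) hab
  simp only [intervalIntegral.integral_same, sub_zero] at hends
  linarith

theorem le_mul_div_rpow_of_hasDerivAt_le {V V' : ℝ → ℝ} {a b r c : ℝ} (hab : a ≤ b) (hbr : b < r)
    (hV : ContinuousOn V (Icc a b)) (hVd : ∀ t ∈ Ioo a b, HasDerivAt V (V' t) t)
    (hle : ∀ t ∈ Ioo a b, V' t ≤ -(c / (r - t)) * V t) :
    V b ≤ V a * ((r - b) / (r - a)) ^ c := by
  have hpos : ∀ t ∈ Icc a b, 0 < r - t := fun t ht => by linarith [ht.2]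
  have h := mul_exp_le_add_integral_of_hasDerivAt_le (G := fun t => -(c * log (r - t)))
    (g := fun t => c / (r - t)) (h := 0) hab hV ?_ continuousOn_const hVd ?_ (by simpa using hle)
  · have hr : r - b ≠ 0 := (hpos b (right_mem_Icc.2 hab)).ne'
    have hr' : r - a ≠ 0 := (hpos a (left_mem_Icc.2 hab)).ne'
    simp only [Pi.zero_apply, zero_mul, intervalIntegral.integral_zero, add_zero] at h
    rw [rpow_def_of_pos (div_pos (hpos b (right_mem_Icc.2 hab)) (hpos a (left_mem_Icc.2 hab))),
      log_div hr hr']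
    calc V b = V b * exp (-(c * log (r - b))) * exp (c * log (r - b)) := by
          rw [mul_assoc, ← exp_add, neg_add_cancel, exp_zero, mul_one]
      _ ≤ V a * exp (-(c * log (r - a))) * exp (c * log (r - b)) :=
          mul_le_mul_of_nonneg_right h (exp_pos _).le
      _ = V a * exp ((log (r - b) - log (r - a)) * c) := by
          rw [mul_assoc, ← exp_add]; ring_nf
  · exact (continuousOn_const.sub continuousOn_id).log (fun t ht => (hpos t ht).ne')
      |>.const_smul c |>.neg
  · intro t ht
    have hne : r - t ≠ 0 := (hpos t (Ioo_subset_Icc_self ht)).ne'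
    have hsub : HasDerivAt (fun s => r - s) (-1) t := by
      simpa using (hasDerivAt_id t).const_sub r
    exact (((hsub.log hne).const_mul c).neg).congr_deriv (by field_simp)

theorem tendsto_exp_neg_mul_integral_mul_exp {f : ℝ → ℝ} {a T : ℝ} (ha : 0 < a)
    (hf : IntegrableOn f (Ioi T)) :
    Tendsto (fun t => exp (-(a * t)) * ∫ s in T..t, f s * exp (a * s)) atTop (𝓝 0) := by
  set F : ℝ → ℝ → ℝ := fun t => (Iic t).indicator fun s => f s * exp (a * (s - t))
  have hF : ∀ t ≥ T, exp (-(a * t)) * ∫ s in T..t, f s * exp (a * s) = ∫ s in Ioi T, F t s := by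
    intro t ht
    rw [← intervalIntegral.integral_const_mul, intervalIntegral.integral_of_le ht,
      integral_indicator measurableSet_Iic, Measure.restrict_restrict measurableSet_Iic,
      Iic_inter_Ioi]
    congr 1 with s
    rw [mul_left_comm, ← exp_add]
    ring_nf
  have hlim : Tendsto (fun t => ∫ s in Ioi T, F t s) atTop (𝓝 (∫ _ in Ioi T, (0 : ℝ))) := by
    refine tendsto_integral_filter_of_dominated_convergence (fun s => ‖f s‖) ?_ ?_ hf.norm ?_
    · exact Eventually.of_forall fun t => (hf.aestronglyMeasurable.mul
        (by fun_prop : Continuous fun s => exp (a * (s - t))).aestronglyMeasurable).indicator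
        measurableSet_Iic
    · refine Eventually.of_forall fun t => Eventually.of_forall fun s => ?_
      by_cases hst : s ≤ t
      · have hexp : exp (a * (s - t)) ≤ 1 :=
          exp_le_one_iff.2 (mul_nonpos_of_nonneg_of_nonpos ha.le (by linarith))
        simp only [F, indicator_of_mem (mem_Iic.2 hst), norm_mul, norm_of_nonneg (exp_pos _).le]
        exact mul_le_of_le_one_right (norm_nonneg _) hexp
      · simp [F, indicator_of_notMem (notMem_Iic.2 (not_le.1 hst))]
    · refine Eventually.of_forall fun s => ?_
      have hexp : Tendsto (fun t => exp (a * (s - t))) atTop (𝓝 0) :=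
        tendsto_exp_atBot.comp
          ((tendsto_atBot_add_const_left atTop s tendsto_neg_atTop_atBot).const_mul_atBot ha)
      refine (mul_zero (f s) ▸ hexp.const_mul (f s)).congr' ?_
      filter_upwards [eventually_ge_atTop s] with t hst
      simp only [F, indicator_of_mem (mem_Iic.2 hst)]
  rw [integral_zero] at hlim
  exact hlim.congr' (eventually_ge_atTop T |>.mono fun t ht => (hF t ht).symm)

theorem tendsto_zero_of_hasDerivAt_le_neg_mul_add {V V' f : ℝ → ℝ} {a T : ℝ} (ha : 0 < a)
    (hV : ContinuousOn V (Ici T)) (hV0 : ∀ t ≥ T, 0 ≤ V t)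
    (hVd : ∀ t > T, HasDerivAt V (V' t) t) (hf : ContinuousOn f (Ici T))
    (hfi : IntegrableOn f (Ioi T)) (hle : ∀ t > T, V' t ≤ -a * V t + f t) :
    Tendsto V atTop (𝓝 0) := by
  have hbound : ∀ t ≥ T, V t ≤ exp (-(a * t)) * (V T * exp (a * T)) +
      exp (-(a * t)) * ∫ s in T..t, f s * exp (a * s) := by
    intro t ht
    have h := mul_exp_le_add_integral_of_hasDerivAt_le (G := fun s => a * s) (g := fun _ => a) ht
      (hV.mono Icc_subset_Ici_self) (by fun_prop) (hf.mono Icc_subset_Ici_self)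
      (fun s hs => hVd s hs.1) (fun s _ => by simpa using (hasDerivAt_id s).const_mul a)
      (fun s hs => hle s hs.1)
    calc V t = exp (-(a * t)) * (V t * exp (a * t)) := by
          rw [mul_left_comm, ← exp_add, neg_add_cancel, exp_zero, mul_one]
      _ ≤ _ := by rw [← mul_add]; exact mul_le_mul_of_nonneg_left h (exp_pos _).le
  have hlim : Tendsto (fun t => exp (-(a * t)) * (V T * exp (a * T)) +
      exp (-(a * t)) * ∫ s in T..t, f s * exp (a * s)) atTop (𝓝 0) := by
    simpa using ((tendsto_exp_neg_atTop_nhds_zero.comp (tendsto_id.const_mul_atTop ha)).mul_const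
      _).add (tendsto_exp_neg_mul_integral_mul_exp ha hfi)
  exact tendsto_of_tendsto_of_tendsto_of_le_of_le' tendsto_const_nhds hlim
    (eventually_ge_atTop T |>.mono hV0) (eventually_ge_atTop T |>.mono hbound)

theorem integrableOn_Ioi_of_nonneg_of_intervalIntegral_le {f : ℝ → ℝ} {a I : ℝ}
    (hf : ContinuousOn f (Ici a)) (hf0 : ∀ t ≥ a, 0 ≤ f t) (hI : ∀ t ≥ a, ∫ s in a..t, f s ≤ I) :
    IntegrableOn f (Ioi a) := by
  refine integrableOn_Ioi_of_intervalIntegral_norm_bounded I a (b := id) (l := atTop)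
    (fun t => ((hf.mono Icc_subset_Ici_self).integrableOn_Icc).mono_set Ioc_subset_Icc_self)
    tendsto_id ?_
  filter_upwards [eventually_ge_atTop a] with t ht
  rw [intervalIntegral.integral_congr fun s hs => norm_of_nonneg (hf0 s (uIcc_of_le ht ▸ hs).1)]
  exact hI t ht

theorem ContinuousOn.exists_forall_ge_le_of_tendsto {f : ℝ → ℝ} {a l : ℝ}
    (hf : ContinuousOn f (Ici a)) (hlim : Tendsto f atTop (𝓝 l)) : ∃ M, ∀ t ≥ a, f t ≤ M := by
  obtain ⟨R, hR⟩ := eventually_atTop.1 (hlim.eventually (eventually_le_nhds (lt_add_one l)))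
  obtain ⟨M, hM⟩ :=
    isCompact_Icc.bddAbove_image (hf.mono (Icc_subset_Ici_self : Icc a R ⊆ Ici a))
  refine ⟨max M (l + 1), fun t ht => ?_⟩
  rcases le_total t R with htR | hRt
  · exact le_max_of_le_left (hM ⟨t, ⟨ht, htR⟩, rfl⟩)
  · exact le_max_of_le_right (hR t hRt)

theorem corollary1_general (T ε : ℝ) (hT : 0 < T) (hε : 0 < ε)
    (μ : ℝ → ℝ)
    (hμ1 : ∀ t : ℝ, 0 ≤ t → t < T → μ t = (T + ε) / (T + ε - t))
    (k σbar : ℝ) (hk : 0 < k)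
    (σ : ℝ → ℝ) (hσcont : ContinuousOn σ (Set.Ici (0:ℝ)))
    (hσnonneg : ∀ t ≥ (0:ℝ), 0 ≤ σ t)
    (hσint : ∀ t ≥ (0:ℝ), ∫ τ in (0:ℝ)..t, σ τ ≤ σbar)
    (V V' : ℝ → ℝ)
    (hVcont : ContinuousOn V (Set.Ici (0:ℝ)))
    (hVnonneg : ∀ t ≥ (0:ℝ), 0 ≤ V t)
    (hVderiv1 : ∀ t ∈ Set.Ico (0:ℝ) T, HasDerivWithinAt V (V' t) (Set.Ico (0:ℝ) T) t)
    (hineq1 : ∀ t ∈ Set.Ico (0:ℝ) T, V' t ≤ -k * μ t * V t)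
    (hVderiv2 : ∀ t ≥ T, HasDerivWithinAt V (V' t) (Set.Ici T) t)
    (hineq2 : ∀ t ≥ T, V' t ≤ -k * (1 + T / ε) * V t + (1 + T / ε) * σ t) :
    (∃ M : ℝ, ∀ t ≥ (0:ℝ), V t ≤ M) ∧
    V T ≤ V 0 * (ε / (T + ε)) ^ (k * (T + ε)) ∧
    Tendsto V atTop (nhds 0) := by
  have hIciT : Ici T ⊆ Ici 0 := Ici_subset_Ici.2 hT.le
  have hVT : V T ≤ V 0 * (ε / (T + ε)) ^ (k * (T + ε)) := by
    have h := le_mul_div_rpow_of_hasDerivAt_le (r := T + ε) (c := k * (T + ε)) hT.le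
      (by linarith) (hVcont.mono Icc_subset_Ici_self)
      (fun t ht => (hVderiv1 t (Ioo_subset_Ico_self ht)).hasDerivAt (Ico_mem_nhds ht.1 ht.2))
      (fun t ht => (hineq1 t (Ioo_subset_Ico_self ht)).trans_eq
        (by rw [hμ1 t ht.1.le ht.2]; ring))
    rwa [add_sub_cancel_left, sub_zero] at h
  have hσi : IntegrableOn σ (Ioi T) :=
    (integrableOn_Ioi_of_nonneg_of_intervalIntegral_le hσcont hσnonneg hσint).mono_set
      (Ioi_subset_Ioi hT.le)
  have hlim : Tendsto V atTop (𝓝 0) :=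
    tendsto_zero_of_hasDerivAt_le_neg_mul_add (a := k * (1 + T / ε))
      (f := fun t => (1 + T / ε) * σ t) (by positivity)
      (hVcont.mono hIciT) (fun t ht => hVnonneg t (hIciT ht))
      (fun t ht => (hVderiv2 t ht.le).hasDerivAt (Ici_mem_nhds ht))
      (continuousOn_const.mul (hσcont.mono hIciT)) (hσi.const_mul (1 + T / ε))
      (fun t ht => (hineq2 t ht.le).trans_eq (by ring))
  exact ⟨hVcont.exists_forall_ge_le_of_tendsto hlim, hVT, hlim⟩

/-- Corollary 1: with the bounded time-varying gain `μ(t) = (T+ε)/(T+ε−t)` on `[0, T)` and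
`μ(t) = μ̄ = 1 + T/ε` on `[T, ∞)`, a nonnegative continuous `V` satisfying `V′ ≤ −k·μ·V`
on `[0, T)` and `V′ ≤ −k·μ̄·V + μ̄·σ(t)` on `[T, ∞)` (with `σ ≥ 0` continuous and
`∫_0^t σ ≤ σ̄`) is bounded, satisfies `V(T) ≤ V(0)·(ε/(T+ε))^(k(T+ε))`, and
tends to zero as `t → ∞`. -/
theorem corollary1 (T ε : ℝ) (hT : 0 < T) (hε : 0 < ε)
    (μ : ℝ → ℝ)
    (hμ1 : ∀ t : ℝ, 0 ≤ t → t < T → μ t = (T + ε) / (T + ε - t))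
    (hμ2 : ∀ t : ℝ, T ≤ t → μ t = 1 + T / ε)
    (k σbar : ℝ) (hk : 0 < k) (hσbar : 0 < σbar)
    (σ : ℝ → ℝ) (hσcont : ContinuousOn σ (Set.Ici (0:ℝ)))
    (hσnonneg : ∀ t ≥ (0:ℝ), 0 ≤ σ t)
    (hσint : ∀ t ≥ (0:ℝ), ∫ τ in (0:ℝ)..t, σ τ ≤ σbar)
    (V V' : ℝ → ℝ)
    (hVcont : ContinuousOn V (Set.Ici (0:ℝ)))
    (hVnonneg : ∀ t ≥ (0:ℝ), 0 ≤ V t)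
    (hVderiv1 : ∀ t ∈ Set.Ico (0:ℝ) T, HasDerivWithinAt V (V' t) (Set.Ico (0:ℝ) T) t)
    (hineq1 : ∀ t ∈ Set.Ico (0:ℝ) T, V' t ≤ -k * μ t * V t)
    (hVderiv2 : ∀ t ≥ T, HasDerivWithinAt V (V' t) (Set.Ici T) t)
    (hV'cont : ContinuousOn V' (Set.Ici T))
    (hineq2 : ∀ t ≥ T, V' t ≤ -k * (1 + T / ε) * V t + (1 + T / ε) * σ t) :
    (∃ M : ℝ, ∀ t ≥ (0:ℝ), V t ≤ M) ∧
    V T ≤ V 0 * (ε / (T + ε)) ^ (k * (T + ε)) ∧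
    Tendsto V atTop (nhds 0) :=
  corollary1_general T ε hT hε μ hμ1 k σbar hk σ hσcont hσnonneg hσint V V' hVcont hVnonneg hVderiv1
    hineq1 hVderiv2 hineq2
end

section
/- Let ζ ∈ ℝ, σ > 0, g ≥ 0, τ ≥ 0, l ≥ g·τ, and let e ∈ ℝ satisfy |e| ≤ τ. Then g·ζ·e − l·ζ²/√(ζ² + σ²) ≤ l·σ. -/
/-! Since `|e| ≤ τ` and `g τ ≤ l`, the cross term is at most `l |ζ|`. With `s = √(ζ² + σ²)`,
`|ζ| - ζ² / s = (|ζ| / s) (s - |ζ|) ≤ s - |ζ| ≤ σ`, because `|ζ| ≤ s ≤ |ζ| + σ`. -/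

open Real

theorem mul_mul_le_mul_abs_of_abs_le {g τ l e : ℝ} (x : ℝ) (hg : 0 ≤ g) (hl : g * τ ≤ l)
    (he : |e| ≤ τ) : g * x * e ≤ l * |x| :=
  calc g * x * e ≤ |g * x * e| := le_abs_self _
    _ = g * |e| * |x| := by rw [abs_mul, abs_mul, abs_of_nonneg hg]; ring
    _ ≤ g * τ * |x| := by gcongr
    _ ≤ l * |x| := by gcongr

theorem sqrt_sq_add_sq_le_abs_add {x σ : ℝ} (hσ : 0 ≤ σ) : √(x ^ 2 + σ ^ 2) ≤ |x| + σ :=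
  (sqrt_le_left (by positivity)).2 (by nlinarith [sq_abs x, abs_nonneg x])

theorem abs_sub_sq_div_sqrt_sq_add_sq_le {x σ : ℝ} (hσ : 0 ≤ σ) :
    |x| - x ^ 2 / √(x ^ 2 + σ ^ 2) ≤ σ := by
  set s := √(x ^ 2 + σ ^ 2)
  have hxs : |x| ≤ s := abs_le_sqrt (le_add_of_nonneg_right (sq_nonneg σ))
  have hsx : s ≤ |x| + σ := sqrt_sq_add_sq_le_abs_add hσ
  have hs0 : 0 ≤ s := sqrt_nonneg _
  rcases hs0.eq_or_lt with hs | hs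
  · rw [← hs] at hxs ⊢
    simpa using hxs.trans hσ
  · rw [sub_le_comm, le_div_iff₀ hs]
    nlinarith [sq_abs x, abs_nonneg x]

theorem softening_damping_dominates_general (ζ σ g τ l e : ℝ)
    (hσ : 0 < σ) (hg : 0 ≤ g) (hl : g * τ ≤ l) (he : |e| ≤ τ) :
    g * ζ * e - l * ζ ^ 2 / Real.sqrt (ζ ^ 2 + σ ^ 2) ≤ l * σ := by
  have hl0 : 0 ≤ l := (mul_nonneg hg ((abs_nonneg e).trans he)).trans hl
  calc g * ζ * e - l * ζ ^ 2 / √(ζ ^ 2 + σ ^ 2)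
      ≤ l * |ζ| - l * ζ ^ 2 / √(ζ ^ 2 + σ ^ 2) :=
        sub_le_sub_right (mul_mul_le_mul_abs_of_abs_le ζ hg hl he) _
    _ = l * (|ζ| - ζ ^ 2 / √(ζ ^ 2 + σ ^ 2)) := by ring
    _ ≤ l * σ := mul_le_mul_of_nonneg_left (abs_sub_sq_div_sqrt_sq_add_sq_le hσ.le) hl0

/-- Key algebraic step in the proof of Proposition 1: for `σ > 0`, `g, τ ≥ 0`, `l ≥ g·τ`
and `|e| ≤ τ`, the softening-sign damping dominates the cross term:
`g·ζ·e − l·ζ²/√(ζ² + σ²) ≤ l·σ`. -/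
theorem softening_damping_dominates (ζ σ g τ l e : ℝ)
    (hσ : 0 < σ) (hg : 0 ≤ g) (hτ : 0 ≤ τ) (hl : g * τ ≤ l) (he : |e| ≤ τ) :
    g * ζ * e - l * ζ ^ 2 / Real.sqrt (ζ ^ 2 + σ ^ 2) ≤ l * σ :=
  softening_damping_dominates_general ζ σ g τ l e hσ hg hl he
end

section
/- Let n ≥ 2 be an integer, let T > 0 and ε > 0, define μ̄ := 1 + T/ε and μ : [0,∞) → ℝ by μ(t) = (T+ε)/(T+ε−t) for 0 ≤ t < T and μ(t) = μ̄ for t ≥ T. Let k₁,…,kₙ > 0; for 1 ≤ i ≤ n−1 let gᵢ : [0,∞) → [0,∞) be continuous with gᵢ(t) ≤ ḡᵢ and let eᵢ : [0,∞) → ℝ be continuous with |eᵢ(t)| ≤ τᵢ for constants ḡᵢ, τᵢ ≥ 0; for 1 ≤ i ≤ n let σᵢ : [0,∞) → (0,∞) be continuous with ∫_0^∞ σᵢ(τ) dτ ≤ σ̄ᵢ < ∞; and let lᵢ ≥ ḡᵢτᵢ (with lₙ ≥ 0). Suppose ζ₁,…,ζₙ : [0,∞) → ℝ are continuously differentiable,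 ζᵢ(0) = 0, and satisfy: ζ̇₁ = −k₁μζ₁ + g₁e₁ + g₁ζ₂ − l₁ζ₁/√(ζ₁²+σ₁²); for 2 ≤ i ≤ n−1, ζ̇ᵢ = −kᵢμζᵢ + gᵢeᵢ + gᵢζ_{i+1} − g_{i−1}ζ_{i−1} − lᵢζᵢ/√(ζᵢ²+σᵢ²); and ζ̇ₙ = −kₙμζₙ − g_{n−1}ζ_{n−1} − lₙζₙ/√(ζₙ²+σₙ²). Then ζᵢ(t) → 0 as t → ∞ for every i = 1,…,n. -/
/-!
With `V = ∑ ζᵢ²`, the coupling terms `gᵢ ζᵢ ζᵢ₊₁` cancel in pairs in `V'`, the gains give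
`-2κV` with `κ = minᵢ kᵢ` (because `μ ≥ 1`), and `g ζ e - l ζ² / √(ζ² + σ²) ≤ l σ` bounds each
remaining term, so `V' ≤ -2κV + S` with `S = 2 ∑ lᵢ σᵢ` integrable. Variation of constants gives
`V t ≤ e^{-2κt} V 0 + ∫₀ᵗ e^{-2κ(t-s)} S s ds`, and the convolution of an integrable function with
a decaying exponential tends to zero by dominated convergence.
-/

open Set Filter Finset MeasureTheory Topology

theorem antitoneOn_exp_mul_sub_integral_of_hasDerivWithinAt_le {V V' S : ℝ → ℝ} {c : ℝ}
    (hV : ∀ s ≥ 0, HasDerivWithinAt V (V' s) (Ici 0) s)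
    (hle : ∀ s ≥ 0, V' s ≤ -c * V s + S s) (hS : ContinuousOn S (Ici 0)) (t : ℝ) :
    AntitoneOn (fun s => Real.exp (c * s) * V s - ∫ r in 0..s, Real.exp (c * r) * S r)
      (Icc 0 t) := by
  have hexp : Continuous fun s => Real.exp (c * s) := by fun_prop
  have hh : ContinuousOn (fun s => Real.exp (c * s) * S s) (Ici 0) := hexp.continuousOn.mul hS
  refine antitoneOn_of_hasDerivWithinAt_nonpos (convex_Icc 0 t)
    (f' := fun s => Real.exp (c * s) * (c * V s + V' s - S s)) ?_ ?_ ?_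
  · rcases le_or_gt 0 t with ht | ht
    · have hVc : ContinuousOn V (Icc 0 t) := fun s hs =>
        (hV s hs.1).continuousWithinAt.mono Icc_subset_Ici_self
      have hI := intervalIntegral.continuousOn_primitive_interval (μ := volume) (a := 0) (b := t)
        (by rw [uIcc_of_le ht]; exact (hh.mono Icc_subset_Ici_self).integrableOn_Icc)
      rw [uIcc_of_le ht] at hI
      exact (hexp.continuousOn.mul hVc).sub hI
    · simp [Icc_eq_empty_of_lt ht]
  · intro s hs
    rw [interior_Icc] at hs
    have hnhds : Ici (0 : ℝ) ∈ 𝓝 s := Ici_mem_nhds hs.1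
    have hE : HasDerivAt (fun u => Real.exp (c * u)) (Real.exp (c * s) * c) s := by
      simpa using ((hasDerivAt_id s).const_mul c).exp
    have hI : HasDerivAt (fun u => ∫ r in 0..u, Real.exp (c * r) * S r)
        (Real.exp (c * s) * S s) s :=
      intervalIntegral.integral_hasDerivAt_right
        (hh.mono (by rw [uIcc_of_le hs.1.le]; exact Icc_subset_Ici_self)).intervalIntegrable
        (hh.stronglyMeasurableAtFilter_nhdsWithin measurableSet_Ici s
          |>.filter_mono (nhdsWithin_eq_nhds.2 hnhds).ge)
        (hh.continuousAt hnhds)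
    exact (((hE.mul ((hV s hs.1.le).hasDerivAt hnhds)).sub hI).congr_deriv
      (by ring)).hasDerivWithinAt
  · intro s hs
    rw [interior_Icc] at hs
    have := hle s hs.1.le
    exact mul_nonpos_of_nonneg_of_nonpos (Real.exp_pos _).le (by linarith)

theorem le_exp_mul_add_integral_of_hasDerivWithinAt_le {V V' S : ℝ → ℝ} {c t : ℝ}
    (hV : ∀ s ≥ 0, HasDerivWithinAt V (V' s) (Ici 0) s)
    (hle : ∀ s ≥ 0, V' s ≤ -c * V s + S s) (hS : ContinuousOn S (Ici 0)) (ht : 0 ≤ t) :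
    V t ≤ Real.exp (-(c * t)) * V 0 + ∫ s in 0..t, Real.exp (-(c * (t - s))) * S s := by
  have hWt := antitoneOn_exp_mul_sub_integral_of_hasDerivWithinAt_le hV hle hS t
    ⟨le_rfl, ht⟩ ⟨ht, le_rfl⟩ ht
  simp only [mul_zero, Real.exp_zero, one_mul, intervalIntegral.integral_same,
    sub_zero] at hWt
  have hkernel : ∀ s, Real.exp (-(c * (t - s))) * S s
      = Real.exp (-(c * t)) * (Real.exp (c * s) * S s) := by
    intro s
    rw [← mul_assoc, ← Real.exp_add]
    ring_nf
  simp only [hkernel, intervalIntegral.integral_const_mul]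
  have hinv : Real.exp (-(c * t)) * Real.exp (c * t) = 1 := by rw [← Real.exp_add]; simp
  calc V t = Real.exp (-(c * t)) * (Real.exp (c * t) * V t) := by
        rw [← mul_assoc, hinv, one_mul]
    _ ≤ Real.exp (-(c * t)) * (V 0 + ∫ r in 0..t, Real.exp (c * r) * S r) := by
        gcongr; linarith
    _ = _ := by ring

theorem tendsto_integral_exp_neg_mul_sub_mul_zero {S : ℝ → ℝ} {c : ℝ} (hc : 0 < c)
    (hS : IntegrableOn S (Ici 0)) :
    Tendsto (fun t => ∫ s in 0..t, Real.exp (-(c * (t - s))) * S s) atTop (𝓝 0) := by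
  set F : ℝ → ℝ → ℝ := fun t => (Iic t).indicator fun s => Real.exp (-(c * (t - s))) * S s
  have hF : ∀ t ≥ 0, ∫ s in 0..t, Real.exp (-(c * (t - s))) * S s = ∫ s in Ici 0, F t s := by
    intro t ht
    rw [intervalIntegral.integral_of_le ht, setIntegral_indicator measurableSet_Iic,
      Ici_inter_Iic, integral_Icc_eq_integral_Ioc]
  have hlim : Tendsto (fun t => ∫ s in Ici 0, F t s) atTop (𝓝 (∫ _ in Ici (0 : ℝ), (0 : ℝ))) := by
    refine tendsto_integral_filter_of_dominated_convergence (fun s => ‖S s‖)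
      (Eventually.of_forall fun t => ?_) (Eventually.of_forall fun t => ?_) hS.norm ?_
    · exact ((by fun_prop : Continuous fun s => Real.exp (-(c * (t - s)))).aestronglyMeasurable.mul
        hS.aestronglyMeasurable).indicator measurableSet_Iic
    · refine ae_of_all _ fun s => ?_
      by_cases hst : s ≤ t
      · rw [show F t s = _ from indicator_of_mem (Set.mem_Iic.2 hst) _, norm_mul,
          Real.norm_eq_abs (Real.exp _), Real.abs_exp]
        exact mul_le_of_le_one_left (norm_nonneg _) (Real.exp_le_one_iff.2 (by nlinarith))
      · rw [show F t s = 0 from indicator_of_notMem (Set.notMem_Iic.2 (not_le.1 hst)) _,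
          norm_zero]
        exact norm_nonneg _
    · refine ae_of_all _ fun s => ?_
      have hexp : Tendsto (fun t => Real.exp (-(c * (t - s)))) atTop (𝓝 0) :=
        Real.tendsto_exp_neg_atTop_nhds_zero.comp
          ((tendsto_atTop_add_const_right _ (-s) tendsto_id).const_mul_atTop hc)
      refine (tendsto_congr' ?_).2 (by simpa using hexp.mul_const (S s))
      filter_upwards [eventually_ge_atTop s] with t hst
      simp [F, hst]
  rw [integral_zero] at hlim
  exact hlim.congr' (by filter_upwards [eventually_ge_atTop 0] with t ht using (hF t ht).symm)

theorem tendsto_zero_of_hasDerivWithinAt_le_neg_mul_add {V V' S : ℝ → ℝ} {c : ℝ}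
    (hc : 0 < c) (hV_nonneg : ∀ t ≥ 0, 0 ≤ V t)
    (hV : ∀ t ≥ 0, HasDerivWithinAt V (V' t) (Ici 0) t)
    (hle : ∀ t ≥ 0, V' t ≤ -c * V t + S t) (hS : ContinuousOn S (Ici 0))
    (hS_int : IntegrableOn S (Ici 0)) :
    Tendsto V atTop (𝓝 0) := by
  have hexp : Tendsto (fun t => Real.exp (-(c * t)) * V 0) atTop (𝓝 0) := by
    simpa using (Real.tendsto_exp_neg_atTop_nhds_zero.comp
      (tendsto_id.const_mul_atTop hc)).mul_const (V 0)
  refine squeeze_zero' ?_ ?_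
    (by simpa using hexp.add (tendsto_integral_exp_neg_mul_sub_mul_zero hc hS_int))
  · filter_upwards [eventually_ge_atTop 0] with t ht using hV_nonneg t ht
  · filter_upwards [eventually_ge_atTop 0] with t ht
      using le_exp_mul_add_integral_of_hasDerivWithinAt_le hV hle hS ht

theorem abs_sub_sq_div_sqrt_add_sq_le (z : ℝ) {s : ℝ} (hs : 0 ≤ s) :
    |z| - z ^ 2 / √(z ^ 2 + s ^ 2) ≤ s := by
  rcases eq_or_ne z 0 with rfl | hz
  · simpa using hs
  have hr : 0 < √(z ^ 2 + s ^ 2) := Real.sqrt_pos.2 (by positivity)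
  have hzr : |z| ≤ √(z ^ 2 + s ^ 2) := by
    rw [← Real.sqrt_sq_eq_abs]
    exact Real.sqrt_le_sqrt (by nlinarith)
  have hrz : √(z ^ 2 + s ^ 2) ≤ |z| + s := by
    rw [Real.sqrt_le_left (by positivity)]
    nlinarith [sq_abs z, abs_nonneg z]
  rw [sub_le_iff_le_add, ← sub_le_iff_le_add', le_div_iff₀ hr]
  nlinarith [sq_abs z, abs_nonneg z]

theorem mul_local_drift_le {κ m a l z s : ℝ} (hm : κ ≤ m) (ha : |a| ≤ l) (hs : 0 ≤ s) :
    z * (-m * z + a - l * z / √(z ^ 2 + s ^ 2)) ≤ -κ * z ^ 2 + l * s := by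
  have hl : 0 ≤ l := (abs_nonneg a).trans ha
  have hza : z * a ≤ l * |z| :=
    calc z * a ≤ |z| * |a| := by rw [← abs_mul]; exact le_abs_self _
      _ ≤ l * |z| := by rw [mul_comm]; exact mul_le_mul_of_nonneg_right ha (abs_nonneg z)
  have hsoft := mul_le_mul_of_nonneg_left (abs_sub_sq_div_sqrt_add_sq_le z hs) hl
  have hmz : -m * z ^ 2 ≤ -κ * z ^ 2 := by nlinarith [sq_nonneg z]
  calc z * (-m * z + a - l * z / √(z ^ 2 + s ^ 2))
      = -m * z ^ 2 + z * a - l * (z ^ 2 / √(z ^ 2 + s ^ 2)) := by ring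
    _ ≤ -κ * z ^ 2 + l * s := by linarith

theorem sum_Icc_mul_coupling_eq_zero {R : Type*} [CommRing R] {n : ℕ} (w z : ℕ → R)
    (hw₀ : w 0 = 0) (hwₙ : w n = 0) :
    ∑ i ∈ Finset.Icc 1 n, z i * (w i * z (i + 1) - w (i - 1) * z (i - 1)) = 0 := by
  have h := Finset.sum_range_sub (fun i => w i * z i * z (i + 1)) n
  simp only [hw₀, hwₙ, zero_mul, sub_self] at h
  rw [← Finset.Ico_add_one_right_eq_Icc, Finset.sum_Ico_eq_sum_range, Nat.add_sub_cancel, ← h]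
  refine Finset.sum_congr rfl fun i _ => ?_
  rw [add_comm 1 i, Nat.add_sub_cancel]
  ring

theorem tendsto_zero_of_coupled_chain {n : ℕ} {κ : ℝ} (hκ : 0 < κ)
    {m a w σ ζ : ℕ → ℝ → ℝ} {l : ℕ → ℝ} (hm : ∀ i ∈ Finset.Icc 1 n, ∀ t ≥ 0, κ ≤ m i t)
    (ha : ∀ i ∈ Finset.Icc 1 n, ∀ t ≥ 0, |a i t| ≤ l i)
    (hw₀ : ∀ t, w 0 t = 0) (hwₙ : ∀ t, w n t = 0)
    (hσ_cont : ∀ i ∈ Finset.Icc 1 n, ContinuousOn (σ i) (Ici 0))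
    (hσ_nonneg : ∀ i ∈ Finset.Icc 1 n, ∀ t ≥ 0, 0 ≤ σ i t)
    (hσ_int : ∀ i ∈ Finset.Icc 1 n, IntegrableOn (σ i) (Ici 0))
    (hζ : ∀ i ∈ Finset.Icc 1 n, ∀ t ≥ 0, HasDerivWithinAt (ζ i)
      (-m i t * ζ i t + a i t - l i * ζ i t / √(ζ i t ^ 2 + σ i t ^ 2)
        + (w i t * ζ (i + 1) t - w (i - 1) t * ζ (i - 1) t)) (Ici 0) t) :
    ∀ i ∈ Finset.Icc 1 n, Tendsto (ζ i) atTop (𝓝 0) := by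
  set V : ℝ → ℝ := fun t => ∑ i ∈ Finset.Icc 1 n, ζ i t ^ 2
  have hV : Tendsto V atTop (𝓝 0) := by
    refine tendsto_zero_of_hasDerivWithinAt_le_neg_mul_add (mul_pos two_pos hκ)
      (S := fun t => ∑ i ∈ Finset.Icc 1 n, 2 * l i * σ i t)
      (fun t _ => sum_nonneg fun i _ => sq_nonneg _)
      (fun t ht => HasDerivWithinAt.fun_sum fun i hi => (hζ i hi t ht).fun_pow 2)
      (fun t ht => ?_)
      (continuousOn_finsetSum _ fun i hi => (hσ_cont i hi).const_smul (2 * l i))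
      (integrable_finsetSum _ fun i hi => (hσ_int i hi).const_mul _)
    calc ∑ i ∈ Finset.Icc 1 n, ((2 : ℕ) : ℝ) * ζ i t ^ (2 - 1) * (-m i t * ζ i t + a i t
            - l i * ζ i t / √(ζ i t ^ 2 + σ i t ^ 2)
            + (w i t * ζ (i + 1) t - w (i - 1) t * ζ (i - 1) t))
        = 2 * ∑ i ∈ Finset.Icc 1 n, ζ i t * (-m i t * ζ i t + a i t
            - l i * ζ i t / √(ζ i t ^ 2 + σ i t ^ 2))
          + 2 * ∑ i ∈ Finset.Icc 1 n,
            ζ i t * (w i t * ζ (i + 1) t - w (i - 1) t * ζ (i - 1) t) := by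
          simp only [mul_sum, ← sum_add_distrib]
          refine sum_congr rfl fun i _ => ?_
          push_cast
          ring
      _ = 2 * ∑ i ∈ Finset.Icc 1 n, ζ i t * (-m i t * ζ i t + a i t
            - l i * ζ i t / √(ζ i t ^ 2 + σ i t ^ 2)) := by
          rw [sum_Icc_mul_coupling_eq_zero (fun j => w j t) (fun j => ζ j t) (hw₀ t) (hwₙ t)]
          ring
      _ ≤ 2 * ∑ i ∈ Finset.Icc 1 n, (-κ * ζ i t ^ 2 + l i * σ i t) := by
          gcongr with i hi
          exact mul_local_drift_le (hm i hi t ht) (ha i hi t ht) (hσ_nonneg i hi t ht)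
      _ = -(2 * κ) * V t + ∑ i ∈ Finset.Icc 1 n, 2 * l i * σ i t := by
          simp only [V, mul_sum, ← sum_add_distrib]
          refine sum_congr rfl fun i _ => ?_
          ring
  intro i hi
  have hsq : Tendsto (fun t => ζ i t ^ 2) atTop (𝓝 0) :=
    squeeze_zero (fun t => sq_nonneg _)
      (fun t => single_le_sum (f := fun j => ζ j t ^ 2) (fun j _ => sq_nonneg _) hi) hV
  have habs := hsq.sqrt
  rw [Real.sqrt_zero] at habs
  simp only [Real.sqrt_sq_eq_abs] at habs
  exact (tendsto_zero_iff_abs_tendsto_zero _).2 habs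

/-- Extending the gains by zero gives the first and last equations of the chain the shape of
the middle ones. -/
def chainGain (n : ℕ) (g : ℕ → ℝ → ℝ) (i : ℕ) (t : ℝ) : ℝ :=
  if i ∈ Finset.Icc 1 (n - 1) then g i t else 0

theorem one_le_of_eq_div_of_eq_one_add {T ε : ℝ} {μ : ℝ → ℝ} (hT : 0 ≤ T) (hε : 0 < ε)
    (hμ₁ : ∀ t : ℝ, 0 ≤ t → t < T → μ t = (T + ε) / (T + ε - t))
    (hμ₂ : ∀ t : ℝ, T ≤ t → μ t = 1 + T / ε) {t : ℝ} (ht : 0 ≤ t) : 1 ≤ μ t := by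
  rcases lt_or_ge t T with htT | hTt
  · rw [hμ₁ t ht htT, one_le_div (by linarith)]
    linarith
  · rw [hμ₂ t hTt]
    linarith [div_nonneg hT hε.le]

theorem abs_chainGain_mul_le {n : ℕ} {g e : ℕ → ℝ → ℝ} {gbar τ l : ℕ → ℝ}
    (hg_nonneg : ∀ i ∈ Finset.Icc 1 (n - 1), ∀ t ≥ (0:ℝ), 0 ≤ g i t)
    (hg_le : ∀ i ∈ Finset.Icc 1 (n - 1), ∀ t ≥ (0:ℝ), g i t ≤ gbar i)
    (he : ∀ i ∈ Finset.Icc 1 (n - 1), ∀ t ≥ (0:ℝ), |e i t| ≤ τ i)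
    (hl : ∀ i ∈ Finset.Icc 1 (n - 1), gbar i * τ i ≤ l i) (hlₙ : 0 ≤ l n) :
    ∀ i ∈ Finset.Icc 1 n, ∀ t ≥ (0:ℝ), |chainGain n g i t * e i t| ≤ l i := by
  intro i hi t ht
  unfold chainGain
  split_ifs with hi'
  · rw [abs_mul, abs_of_nonneg (hg_nonneg i hi' t ht)]
    calc g i t * |e i t| ≤ gbar i * τ i :=
          mul_le_mul (hg_le i hi' t ht) (he i hi' t ht) (abs_nonneg _)
            ((hg_nonneg i hi' t ht).trans (hg_le i hi' t ht))
      _ ≤ l i := hl i hi'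
  · obtain rfl : i = n := by simp only [Finset.mem_Icc] at hi hi'; omega
    simpa using hlₙ

theorem hasDerivWithinAt_chainGain {n : ℕ} (hn : 2 ≤ n) {k l : ℕ → ℝ} {μ : ℝ → ℝ}
    {g e σ ζ : ℕ → ℝ → ℝ}
    (hζ1 : ∀ t ≥ (0:ℝ), HasDerivWithinAt (ζ 1)
      (-k 1 * μ t * ζ 1 t + g 1 t * e 1 t + g 1 t * ζ 2 t
        - l 1 * ζ 1 t / Real.sqrt ((ζ 1 t) ^ 2 + (σ 1 t) ^ 2)) (Set.Ici (0:ℝ)) t)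
    (hζmid : ∀ i ∈ Finset.Icc 2 (n - 1), ∀ t ≥ (0:ℝ), HasDerivWithinAt (ζ i)
      (-k i * μ t * ζ i t + g i t * e i t + g i t * ζ (i + 1) t
        - g (i - 1) t * ζ (i - 1) t
        - l i * ζ i t / Real.sqrt ((ζ i t) ^ 2 + (σ i t) ^ 2)) (Set.Ici (0:ℝ)) t)
    (hζn : ∀ t ≥ (0:ℝ), HasDerivWithinAt (ζ n)
      (-k n * μ t * ζ n t - g (n - 1) t * ζ (n - 1) t
        - l n * ζ n t / Real.sqrt ((ζ n t) ^ 2 + (σ n t) ^ 2)) (Set.Ici (0:ℝ)) t) :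
    ∀ i ∈ Finset.Icc 1 n, ∀ t ≥ (0:ℝ), HasDerivWithinAt (ζ i)
      (-(k i * μ t) * ζ i t + chainGain n g i t * e i t
        - l i * ζ i t / √(ζ i t ^ 2 + σ i t ^ 2)
        + (chainGain n g i t * ζ (i + 1) t - chainGain n g (i - 1) t * ζ (i - 1) t))
      (Ici 0) t := by
  intro i hi t ht
  have hgain : ∀ j, chainGain n g j t = if 1 ≤ j ∧ j ≤ n - 1 then g j t else 0 := fun j => by
    simp only [chainGain, Finset.mem_Icc]
  rw [Finset.mem_Icc] at hi
  rcases (by omega : i = 1 ∨ (2 ≤ i ∧ i ≤ n - 1) ∨ i = n) with rfl | hmid | rfl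
  · convert hζ1 t ht using 1
    simp only [hgain, if_pos (by omega : 1 ≤ 1 ∧ 1 ≤ n - 1),
      if_neg (by omega : ¬(1 ≤ 1 - 1 ∧ 1 - 1 ≤ n - 1))]
    ring
  · convert hζmid i (Finset.mem_Icc.2 hmid) t ht using 1
    simp only [hgain, if_pos (by omega : 1 ≤ i ∧ i ≤ n - 1),
      if_pos (by omega : 1 ≤ i - 1 ∧ i - 1 ≤ n - 1)]
    ring
  · convert hζn t ht using 1
    simp only [hgain, if_neg (by omega : ¬(1 ≤ i ∧ i ≤ i - 1)),
      if_pos (by omega : 1 ≤ i - 1 ∧ i - 1 ≤ i - 1)]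
    ring

theorem proposition1_general
    (n : ℕ) (hn : 2 ≤ n) (T ε : ℝ) (hT : 0 < T) (hε : 0 < ε)
    (μ : ℝ → ℝ)
    (hμ1 : ∀ t : ℝ, 0 ≤ t → t < T → μ t = (T + ε) / (T + ε - t))
    (hμ2 : ∀ t : ℝ, T ≤ t → μ t = 1 + T / ε)
    (k : ℕ → ℝ) (hk : ∀ i ∈ Finset.Icc 1 n, 0 < k i)
    (g e : ℕ → ℝ → ℝ) (gbar τ : ℕ → ℝ)
    (hgnonneg : ∀ i ∈ Finset.Icc 1 (n - 1), ∀ t ≥ (0:ℝ), 0 ≤ g i t)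
    (hgbdd : ∀ i ∈ Finset.Icc 1 (n - 1), ∀ t ≥ (0:ℝ), g i t ≤ gbar i)
    (hebdd : ∀ i ∈ Finset.Icc 1 (n - 1), ∀ t ≥ (0:ℝ), |e i t| ≤ τ i)
    (σ : ℕ → ℝ → ℝ) (σbar : ℕ → ℝ)
    (hσcont : ∀ i ∈ Finset.Icc 1 n, ContinuousOn (σ i) (Set.Ici (0:ℝ)))
    (hσpos : ∀ i ∈ Finset.Icc 1 n, ∀ t ≥ (0:ℝ), 0 < σ i t)
    (hσint : ∀ i ∈ Finset.Icc 1 n, MeasureTheory.IntegrableOn (σ i) (Set.Ici (0:ℝ)) ∧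
      ∫ t in Set.Ici (0:ℝ), σ i t ≤ σbar i)
    (l : ℕ → ℝ)
    (hl : ∀ i ∈ Finset.Icc 1 (n - 1), gbar i * τ i ≤ l i) (hln : 0 ≤ l n)
    (ζ : ℕ → ℝ → ℝ)
    (hζ1 : ∀ t ≥ (0:ℝ), HasDerivWithinAt (ζ 1)
      (-k 1 * μ t * ζ 1 t + g 1 t * e 1 t + g 1 t * ζ 2 t
        - l 1 * ζ 1 t / Real.sqrt ((ζ 1 t) ^ 2 + (σ 1 t) ^ 2)) (Set.Ici (0:ℝ)) t)
    (hζmid : ∀ i ∈ Finset.Icc 2 (n - 1), ∀ t ≥ (0:ℝ), HasDerivWithinAt (ζ i)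
      (-k i * μ t * ζ i t + g i t * e i t + g i t * ζ (i + 1) t
        - g (i - 1) t * ζ (i - 1) t
        - l i * ζ i t / Real.sqrt ((ζ i t) ^ 2 + (σ i t) ^ 2)) (Set.Ici (0:ℝ)) t)
    (hζn : ∀ t ≥ (0:ℝ), HasDerivWithinAt (ζ n)
      (-k n * μ t * ζ n t - g (n - 1) t * ζ (n - 1) t
        - l n * ζ n t / Real.sqrt ((ζ n t) ^ 2 + (σ n t) ^ 2)) (Set.Ici (0:ℝ)) t) :
    ∀ i ∈ Finset.Icc 1 n, Tendsto (ζ i) atTop (nhds 0) := by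
  have hne : (Finset.Icc 1 n).Nonempty := Finset.nonempty_Icc.2 (by omega)
  have hκ_le : ∀ i ∈ Finset.Icc 1 n, ∀ t ≥ (0:ℝ), (Finset.Icc 1 n).inf' hne k ≤ k i * μ t :=
    fun i hi t ht => (inf'_le k hi).trans
      (le_mul_of_one_le_right (hk i hi).le (one_le_of_eq_div_of_eq_one_add hT.le hε hμ1 hμ2 ht))
  exact tendsto_zero_of_coupled_chain ((lt_inf'_iff hne).2 hk) hκ_le
    (abs_chainGain_mul_le hgnonneg hgbdd hebdd hl hln) (fun _ => if_neg (by simp))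
    (fun _ => if_neg (by simp; omega)) hσcont (fun i hi t ht => (hσpos i hi t ht).le)
    (fun i hi => (hσint i hi).1) (hasDerivWithinAt_chainGain hn hζ1 hζmid hζn)

/-- Proposition 1: the time-varying error compensator driven by bounded filter errors
`eᵢ` (with `|eᵢ| ≤ τᵢ`), with softening-sign damping gains `lᵢ ≥ ḡᵢτᵢ` and positive
integrable softening functions `σᵢ`, produces compensation signals `ζᵢ` converging to
zero as `t → ∞`. -/
theorem proposition1
    (n : ℕ) (hn : 2 ≤ n) (T ε : ℝ) (hT : 0 < T) (hε : 0 < ε)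
    (μ : ℝ → ℝ)
    (hμ1 : ∀ t : ℝ, 0 ≤ t → t < T → μ t = (T + ε) / (T + ε - t))
    (hμ2 : ∀ t : ℝ, T ≤ t → μ t = 1 + T / ε)
    (k : ℕ → ℝ) (hk : ∀ i ∈ Finset.Icc 1 n, 0 < k i)
    (g e : ℕ → ℝ → ℝ) (gbar τ : ℕ → ℝ)
    (hgbar : ∀ i ∈ Finset.Icc 1 (n - 1), 0 ≤ gbar i)
    (hτ : ∀ i ∈ Finset.Icc 1 (n - 1), 0 ≤ τ i)
    (hgcont : ∀ i ∈ Finset.Icc 1 (n - 1), ContinuousOn (g i) (Set.Ici (0:ℝ)))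
    (hgnonneg : ∀ i ∈ Finset.Icc 1 (n - 1), ∀ t ≥ (0:ℝ), 0 ≤ g i t)
    (hgbdd : ∀ i ∈ Finset.Icc 1 (n - 1), ∀ t ≥ (0:ℝ), g i t ≤ gbar i)
    (hecont : ∀ i ∈ Finset.Icc 1 (n - 1), ContinuousOn (e i) (Set.Ici (0:ℝ)))
    (hebdd : ∀ i ∈ Finset.Icc 1 (n - 1), ∀ t ≥ (0:ℝ), |e i t| ≤ τ i)
    (σ : ℕ → ℝ → ℝ) (σbar : ℕ → ℝ)
    (hσcont : ∀ i ∈ Finset.Icc 1 n, ContinuousOn (σ i) (Set.Ici (0:ℝ)))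
    (hσpos : ∀ i ∈ Finset.Icc 1 n, ∀ t ≥ (0:ℝ), 0 < σ i t)
    (hσint : ∀ i ∈ Finset.Icc 1 n, MeasureTheory.IntegrableOn (σ i) (Set.Ici (0:ℝ)) ∧
      ∫ t in Set.Ici (0:ℝ), σ i t ≤ σbar i)
    (l : ℕ → ℝ)
    (hl : ∀ i ∈ Finset.Icc 1 (n - 1), gbar i * τ i ≤ l i) (hln : 0 ≤ l n)
    (ζ : ℕ → ℝ → ℝ)
    (hζ0 : ∀ i ∈ Finset.Icc 1 n, ζ i 0 = 0)
    (hζ1 : ∀ t ≥ (0:ℝ), HasDerivWithinAt (ζ 1)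
      (-k 1 * μ t * ζ 1 t + g 1 t * e 1 t + g 1 t * ζ 2 t
        - l 1 * ζ 1 t / Real.sqrt ((ζ 1 t) ^ 2 + (σ 1 t) ^ 2)) (Set.Ici (0:ℝ)) t)
    (hζmid : ∀ i ∈ Finset.Icc 2 (n - 1), ∀ t ≥ (0:ℝ), HasDerivWithinAt (ζ i)
      (-k i * μ t * ζ i t + g i t * e i t + g i t * ζ (i + 1) t
        - g (i - 1) t * ζ (i - 1) t
        - l i * ζ i t / Real.sqrt ((ζ i t) ^ 2 + (σ i t) ^ 2)) (Set.Ici (0:ℝ)) t)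
    (hζn : ∀ t ≥ (0:ℝ), HasDerivWithinAt (ζ n)
      (-k n * μ t * ζ n t - g (n - 1) t * ζ (n - 1) t
        - l n * ζ n t / Real.sqrt ((ζ n t) ^ 2 + (σ n t) ^ 2)) (Set.Ici (0:ℝ)) t) :
    ∀ i ∈ Finset.Icc 1 n, Tendsto (ζ i) atTop (nhds 0) :=
  proposition1_general n hn T ε hT hε μ hμ1 hμ2 k hk g e gbar τ hgnonneg hgbdd hebdd σ σbar hσcont
    hσpos hσint l hl hln ζ hζ1 hζmid hζn
end
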